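/- arXiv:1806.06266 — 5 statements merged into one kernel-verified Lean document; each statement's English description precedes it below -/
import Mathlib

section
/- Let I_1 = { floor(n/n_1), floor(2n/n_1), ..., floor(n_1 · n/n_1) } and I_2 = { g(n/n_2), g(2n/n_2), ..., g(n_2 · n/n_2) }, where g(x) = ceil(x) - 1 is the largest integer strictly smaller than x. If n_1, n_2 are positive integers with n_1 + n_2 = n, then I_1 and I_2 are disjoint and their union is {1, 2, ..., n}. -/
/-!
An integer `m` equals `⌊k n / n₁⌋` exactly when `k n ∈ [m n₁, (m + 1) n₁)`, and equals
`⌈k n / n₂⌉ - 1` exactly when `k n ∈ (m n₂, (m + 1) n₂]`. If `m` lay in both `I₁` and `I₂`, with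
indices `k` and `l`, adding the two ranges would give `m n < (k + l) n < (m + 1) n`. Both maps are
injective because their slopes `n / n₁` and `n / n₂` are at least one, and both land in `{1, …, n}`;
so `I₁` and `I₂` are disjoint subsets of `{1, …, n}` of sizes `n₁` and `n₂`, and must fill it.
-/

open Finset

section FloorRing

variable {α : Type*} [Field α] [LinearOrder α] [IsStrictOrderedRing α] [FloorRing α]

theorem Int.floor_intCast_div_eq_iff {a b m : ℤ} (hb : 0 < b) :
    ⌊(a : α) / b⌋ = m ↔ m * b ≤ a ∧ a < (m + 1) * b := by
  have hb' : (0 : α) < b := by exact_mod_cast hb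
  rw [Int.floor_eq_iff, le_div_iff₀ hb', div_lt_iff₀ hb']
  norm_cast

theorem Int.ceil_intCast_div_sub_one_eq_iff {a b m : ℤ} (hb : 0 < b) :
    ⌈(a : α) / b⌉ - 1 = m ↔ m * b < a ∧ a ≤ (m + 1) * b := by
  have hb' : (0 : α) < b := by exact_mod_cast hb
  rw [sub_eq_iff_eq_add, Int.ceil_eq_iff, lt_div_iff₀ hb', div_le_iff₀ hb', Int.cast_add,
    Int.cast_one, add_sub_cancel_right]
  norm_cast

end FloorRing

theorem Int.eq_of_abs_sub_mul_lt {k l n : ℤ} (h : |(k - l) * n| < n) : k = l := by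
  have hn : 0 < n := (abs_nonneg _).trans_lt h
  rw [abs_mul, abs_of_pos hn] at h
  have : |k - l| < 1 := lt_of_mul_lt_mul_right (by simpa using h) hn.le
  exact sub_eq_zero.1 (Int.abs_lt_one_iff.1 this)

def floorSlot (n d k : ℕ) : ℤ := ⌊((k * n : ℕ) : ℚ) / (d : ℚ)⌋

def ceilSlot (n d k : ℕ) : ℤ := ⌈((k * n : ℕ) : ℚ) / (d : ℚ)⌉ - 1

section Slots

variable {n d k : ℕ} {m : ℤ}

theorem floorSlot_eq_iff (hd : 0 < d) :
    floorSlot n d k = m ↔ m * d ≤ k * n ∧ k * n < (m + 1) * d := by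
  have := Int.floor_intCast_div_eq_iff (α := ℚ) (a := k * n) (m := m) (Int.natCast_pos.2 hd)
  push_cast at this
  simpa [floorSlot] using this

theorem ceilSlot_eq_iff (hd : 0 < d) :
    ceilSlot n d k = m ↔ m * d < k * n ∧ k * n ≤ (m + 1) * d := by
  have := Int.ceil_intCast_div_sub_one_eq_iff (α := ℚ) (a := k * n) (m := m) (Int.natCast_pos.2 hd)
  push_cast at this
  simpa [ceilSlot] using this

theorem floorSlot_spec (hd : 0 < d) :
    floorSlot n d k * d ≤ k * n ∧ k * n < (floorSlot n d k + 1) * d :=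
  (floorSlot_eq_iff hd).1 rfl

theorem ceilSlot_spec (hd : 0 < d) :
    ceilSlot n d k * d < k * n ∧ k * n ≤ (ceilSlot n d k + 1) * d :=
  (ceilSlot_eq_iff hd).1 rfl

theorem floorSlot_injective (hd : 0 < d) (hdn : d ≤ n) : Function.Injective (floorSlot n d) := by
  intro k₁ k₂ h
  obtain ⟨h₁, h₁'⟩ := floorSlot_spec (n := n) (k := k₁) hd
  obtain ⟨h₂, h₂'⟩ := (floorSlot_eq_iff hd).1 h.symm
  have hdn' : (d : ℤ) ≤ n := by exact_mod_cast hdn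
  have : |((k₁ : ℤ) - k₂) * n| < n := abs_lt.2 ⟨by linarith, by linarith⟩
  exact_mod_cast Int.eq_of_abs_sub_mul_lt this

theorem ceilSlot_injective (hd : 0 < d) (hdn : d ≤ n) : Function.Injective (ceilSlot n d) := by
  intro k₁ k₂ h
  obtain ⟨h₁, h₁'⟩ := ceilSlot_spec (n := n) (k := k₁) hd
  obtain ⟨h₂, h₂'⟩ := (ceilSlot_eq_iff hd).1 h.symm
  have hdn' : (d : ℤ) ≤ n := by exact_mod_cast hdn
  have : |((k₁ : ℤ) - k₂) * n| < n := abs_lt.2 ⟨by linarith, by linarith⟩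
  exact_mod_cast Int.eq_of_abs_sub_mul_lt this

def floorSlots (n d : ℕ) : Finset ℤ := (Icc 1 d).image (floorSlot n d)

def ceilSlots (n d : ℕ) : Finset ℤ := (Icc 1 d).image (ceilSlot n d)

theorem card_floorSlots (hd : 0 < d) (hdn : d ≤ n) : #(floorSlots n d) = d := by
  rw [floorSlots, card_image_of_injective _ (floorSlot_injective hd hdn), Nat.card_Icc,
    Nat.add_sub_cancel]

theorem card_ceilSlots (hd : 0 < d) (hdn : d ≤ n) : #(ceilSlots n d) = d := by
  rw [ceilSlots, card_image_of_injective _ (ceilSlot_injective hd hdn), Nat.card_Icc,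
    Nat.add_sub_cancel]

theorem floorSlots_subset_Icc (hdn : d < n) : floorSlots n d ⊆ Icc 1 (n : ℤ) := by
  simp only [floorSlots, image_subset_iff, mem_Icc]
  rintro k ⟨hk₁, hkd⟩
  have hd : (0 : ℤ) < d := by omega
  obtain ⟨hlo, hhi⟩ := floorSlot_spec (n := n) (k := k) (Int.natCast_pos.1 hd)
  zify at hk₁ hkd hdn
  refine ⟨?_, le_of_mul_le_mul_right (by nlinarith) hd⟩
  have : 1 * (d : ℤ) < (floorSlot n d k + 1) * d := by nlinarith
  linarith [lt_of_mul_lt_mul_right this hd.le]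

theorem ceilSlots_subset_Icc (hdn : d < n) : ceilSlots n d ⊆ Icc 1 (n : ℤ) := by
  simp only [ceilSlots, image_subset_iff, mem_Icc]
  rintro k ⟨hk₁, hkd⟩
  have hd : (0 : ℤ) < d := by omega
  obtain ⟨hlo, hhi⟩ := ceilSlot_spec (n := n) (k := k) (Int.natCast_pos.1 hd)
  zify at hk₁ hkd hdn
  refine ⟨?_, le_of_mul_le_mul_right (by nlinarith) hd⟩
  have : 1 * (d : ℤ) < (ceilSlot n d k + 1) * d := by nlinarith
  linarith [lt_of_mul_lt_mul_right this hd.le]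

theorem disjoint_floorSlots_ceilSlots {n₁ n₂ : ℕ} (hn₁ : 0 < n₁) (hn₂ : 0 < n₂)
    (hsum : n₁ + n₂ = n) : Disjoint (floorSlots n n₁) (ceilSlots n n₂) := by
  simp only [floorSlots, ceilSlots, disjoint_left, mem_image]
  rintro _ ⟨k, -, rfl⟩ ⟨l, -, h⟩
  obtain ⟨hk, hk'⟩ := floorSlot_spec (n := n) (k := k) hn₁
  obtain ⟨hl, hl'⟩ := (ceilSlot_eq_iff hn₂).1 h
  set m := floorSlot n n₁ k
  have hn : (n : ℤ) = n₁ + n₂ := by exact_mod_cast hsum.symm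
  have hlo : m * n < (k + l) * n := by linear_combination hk + hl + m * hn
  have hhi : (k + l) * n < (m + 1) * n := by linear_combination hk' + hl' - (m + 1) * hn
  have := lt_of_mul_lt_mul_right hlo (by omega)
  have := lt_of_mul_lt_mul_right hhi (by omega)
  omega

end Slots

/-- with `n₁ + n₂ = n`, the slots
`I₁ = {⌊k·n/n₁⌋ : k = 1,…,n₁}` and `I₂ = {g(k·n/n₂) : k = 1,…,n₂}`, where
`g(x) = ⌈x⌉ - 1` is the largest integer strictly smaller than `x`, are
disjoint and their union is `{1,…,n}`. -/
theorem interleaving_slots (n n₁ n₂ : ℕ) (hn₁ : 0 < n₁) (hn₂ : 0 < n₂)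
    (hsum : n₁ + n₂ = n) :
    let I₁ : Finset ℤ :=
      (Finset.Icc 1 n₁).image (fun k => ⌊((k * n : ℕ) : ℚ) / (n₁ : ℚ)⌋)
    let I₂ : Finset ℤ :=
      (Finset.Icc 1 n₂).image (fun k => ⌈((k * n : ℕ) : ℚ) / (n₂ : ℚ)⌉ - 1)
    Disjoint I₁ I₂ ∧ I₁ ∪ I₂ = Finset.Icc (1 : ℤ) (n : ℤ) := by
  show Disjoint (floorSlots n n₁) (ceilSlots n n₂) ∧
    floorSlots n n₁ ∪ ceilSlots n n₂ = Icc 1 (n : ℤ)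
  have hdisj := disjoint_floorSlots_ceilSlots hn₁ hn₂ hsum
  have hsub : floorSlots n n₁ ∪ ceilSlots n n₂ ⊆ Icc 1 (n : ℤ) :=
    union_subset (floorSlots_subset_Icc (by omega)) (ceilSlots_subset_Icc (by omega))
  refine ⟨hdisj, eq_of_subset_of_card_le hsub ?_⟩
  rw [card_union_of_disjoint hdisj, card_floorSlots hn₁ (by omega), card_ceilSlots hn₂ (by omega),
    Int.card_Icc]
  omega
end

section
/- Suppose the paper-review assignment is such that the review-relation graph H contains a cycle of length at least 3 with the property that no single reviewer reviews all papers on the cycle. Then there is no aggregation rule f such that (M, f) is pairwise unanimous. Concretely: there exists a valid profile of reviewer rankings under which pairwise unanimity forces the output ranking to contain a directed cycle among the papers, a contradiction. -/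
/-!
Give each reviewer `i` the ranking that lists the cycle `c` in cyclic order starting at a
paper `c tᵢ` that `i` does not review, followed by all other papers. Whenever `i` reviews both
`c k` and `c (k + 1)`, the break point `tᵢ` is not `k + 1`, so `i` ranks `c k` above `c (k + 1)`.
Pairwise unanimity then makes the aggregate ranking strictly increase all the way around the cycle.
-/

/-- A profile: each reviewer `i` submits a ranking of the papers in her review
set `P i`, encoded as a position function injective on `P i`. -/
def Profile (m n : ℕ) (P : Fin m → Finset (Fin n)) :=
  ∀ i : Fin m, {r : Fin n → ℕ // Set.InjOn r ↑(P i)}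

/-- Pairwise unanimity. -/
def PairwiseUnanimous {m n : ℕ} (P : Fin m → Finset (Fin n))
    (f : Profile m n P → Equiv.Perm (Fin n)) : Prop :=
  ∀ (π : Profile m n P) (p q : Fin n),
    (∃ i, p ∈ P i ∧ q ∈ P i) →
    (∀ i, p ∈ P i → q ∈ P i → (π i).1 p < (π i).1 q) →
    f π p < f π q

open Fin.NatCast in
theorem Fin.not_forall_lt_add_one {α : Type*} [Preorder α] {L : ℕ} [NeZero L] (g : Fin L → α) :
    ¬ ∀ k, g k < g (k + 1) := by
  intro h
  have hmono : StrictMono fun k : ℕ => g k := strictMono_nat_of_lt_succ fun k => by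
    simpa only [Nat.cast_succ] using h k
  simpa using hmono (Nat.pos_of_neZero L)

theorem Fin.val_add_one_of_add_one_ne_zero {L : ℕ} [NeZero L] {a : Fin L} (h : a + 1 ≠ 0) :
    (a + 1).val = a.val + 1 := by
  obtain ⟨L, rfl⟩ := Nat.exists_eq_succ_of_ne_zero (NeZero.ne L)
  rw [Fin.val_add_one, if_neg]
  rintro rfl
  simp at h

theorem Fin.mk_add_one_mod {L : ℕ} [NeZero L] (k : Fin L) (h : (k + 1) % L < L) :
    (⟨(k + 1) % L, h⟩ : Fin L) = k + 1 := by
  ext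
  simp [Fin.val_add]

/-- The ranking `c t ≺ c (t + 1) ≺ ⋯ ≺ c (t - 1)`, followed by the papers off the cycle. -/
noncomputable def cycleRank {L n : ℕ} (c : Fin L → Fin n) (t : Fin L) : Fin n → ℕ :=
  Function.extend c (fun j => (j - t : Fin L).val) (fun p => L + p.val)

section cycleRank

variable {L n : ℕ} {c : Fin L → Fin n}

theorem cycleRank_apply (hc : c.Injective) (t j : Fin L) : cycleRank c t (c j) = (j - t).val :=
  hc.extend_apply _ _ j

theorem cycleRank_injective [NeZero L] (hc : c.Injective) (t : Fin L) :
    (cycleRank c t).Injective := by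
  have rank_of_not_mem {p : Fin n} (hp : p ∉ Set.range c) : cycleRank c t p = L + p.val :=
    Function.extend_apply' _ _ p hp
  intro p q hpq
  by_cases hp : p ∈ Set.range c <;> by_cases hq : q ∈ Set.range c
  · obtain ⟨i, rfl⟩ := hp
    obtain ⟨j, rfl⟩ := hq
    rw [cycleRank_apply hc, cycleRank_apply hc, Fin.val_inj, sub_left_inj] at hpq
    rw [hpq]
  · obtain ⟨i, rfl⟩ := hp
    rw [cycleRank_apply hc, rank_of_not_mem hq] at hpq
    omega
  · obtain ⟨j, rfl⟩ := hq
    rw [cycleRank_apply hc, rank_of_not_mem hp] at hpq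
    omega
  · rw [rank_of_not_mem hp, rank_of_not_mem hq] at hpq
    exact Fin.ext (by omega)

theorem cycleRank_lt_add_one [NeZero L] (hc : c.Injective) {t k : Fin L} (hk : k + 1 ≠ t) :
    cycleRank c t (c k) < cycleRank c t (c (k + 1)) := by
  have hne : k - t + 1 ≠ 0 := by rwa [sub_add_eq_add_sub, sub_ne_zero]
  rw [cycleRank_apply hc, cycleRank_apply hc, ← sub_add_eq_add_sub,
    Fin.val_add_one_of_add_one_ne_zero hne]
  exact Nat.lt_succ_self _

end cycleRank

/-- if the review-relation graph contains a cycle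
`c 0, c 1, …, c (L-1)` of length `L ≥ 3` (consecutive papers, cyclically, are
co-reviewed by some reviewer) such that no single reviewer reviews all the
papers on the cycle, then no aggregation rule is pairwise unanimous. -/
theorem no_pu_with_uncovered_cycle {m n : ℕ} (P : Fin m → Finset (Fin n))
    (L : ℕ) (hL : 3 ≤ L) (c : Fin L → Fin n) (hcinj : Function.Injective c)
    (hadj : ∀ k : Fin L,
      ∃ i, c k ∈ P i ∧ c ⟨((k : ℕ) + 1) % L, Nat.mod_lt _ (by omega)⟩ ∈ P i)
    (hcover : ∀ i : Fin m, ∃ k : Fin L, c k ∉ P i) :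
    ∀ f : Profile m n P → Equiv.Perm (Fin n), ¬ PairwiseUnanimous P f := by
  intro f hpu
  have : NeZero L := ⟨by omega⟩
  choose t ht using hcover
  let π : Profile m n P := fun i => ⟨cycleRank c (t i), (cycleRank_injective hcinj (t i)).injOn⟩
  refine Fin.not_forall_lt_add_one (fun k => f π (c k)) fun k => hpu π _ _ ?_ ?_
  · simpa only [Fin.mk_add_one_mod] using hadj k
  · intro i _ hk
    refine cycleRank_lt_add_one hcinj fun hkt => ht i ?_
    rwa [← hkt]
end

section
/- Let n ≥ 4 and let the papers be partitioned into four disjoint nonempty sets Q_1, Q_2, Q_3, Q_4. Consider the review graph with three reviewers where reviewer 1 reviews Q_1 ∪ Q_2, reviewer 2 reviews Q_2 ∪ Q_3, and reviewer 3 reviews Q_3 ∪ Q_4. Then there is no aggregation rule f such that (M, f) is both group unanimous and weakly strategyproof. -/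
/-- Group unanimity. -/
def GroupUnanimous {m n : ℕ} (P : Fin m → Finset (Fin n))
    (f : Profile m n P → Equiv.Perm (Fin n)) : Prop :=
  ∀ (π : Profile m n P) (S : Finset (Fin n)), S.Nonempty → S ⊂ Finset.univ →
    (∀ i p q, p ∈ P i → q ∈ P i → p ∈ S → q ∉ S → (π i).1 p < (π i).1 q) →
    ∀ p q, p ∈ S → q ∉ S → (∃ i, p ∈ P i ∧ q ∈ P i) →
      f π p < f π q

/-- Weak strategyproofness: for every reviewer `i` there is some paper whose
output position is unchanged across any two profiles differing only in
reviewer `i`'s ranking. -/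
def WeaklyStrategyproof {m n : ℕ} (P : Fin m → Finset (Fin n))
    (f : Profile m n P → Equiv.Perm (Fin n)) : Prop :=
  ∀ i : Fin m, ∃ j : Fin n, ∀ π π' : Profile m n P,
    (∀ i', i' ≠ i → π i' = π' i') → f π j = f π' j

/-!
Fix the order inside each block (by paper index) and let reviewer `i` only decide which of her two
blocks comes first: every orientation `v : Fin 3 → Bool` of the path `Q 0 – Q 1 – Q 2 – Q 3` gives
a profile. Group unanimity, applied to the lower sets of a height function of `v`, forces the
output to keep every block in index order and to put each reviewer's preferred block before her
other one. Weak strategyproofness yields papers `j₀, j₁, j₂` whose positions survive a change of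
orientation at reviewer `0, 1, 2` respectively.

Every step uses one counting principle: if `j` has the same position in two outputs and each other
paper precedes `j` in the first output or follows it in the second, then `j` has the same
predecessors in both. Comparing the orientations `0 ≻ 1 ≻ 2 ≻ 3`, `3 ≻ 2 ≻ 1 ≻ 0`,
`1 ≻ 0, 1 ≻ 2 ≻ 3` and `2 ≻ 1 ≻ 0, 2 ≻ 3` confines `j₀` to `Q 2 ∪ Q 3`, `j₂` to `Q 0 ∪ Q 1` and
`j₁` to `Q 0 ∪ Q 3`, after which the three positions cannot all be kept. The orientations
`1 ≻ 0, 1 ≻ 2, 3 ≻ 2` and `0 ≻ 1, 2 ≻ 1, 2 ≻ 3` settle the cases where `j₁` shares its block with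
`j₂` or `j₀`.
-/

open Finset Equiv

theorem exists_forall_mem_iff_eq {ι α : Type*} [Fintype ι] [DecidableEq α]
    [Fintype α] {Q : ι → Finset α} (hdisj : ∀ a b, a ≠ b → Disjoint (Q a) (Q b))
    (hcover : univ.biUnion Q = univ) : ∃ β : α → ι, ∀ p k, p ∈ Q k ↔ β p = k := by
  have hmem (p : α) : ∃ k, p ∈ Q k := by
    simpa using (hcover.symm ▸ mem_univ p : p ∈ univ.biUnion Q)
  choose β hβ using hmem
  refine ⟨β, fun p k => ⟨fun hk => ?_, fun hk => hk ▸ hβ p⟩⟩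
  by_contra hne
  exact disjoint_left.1 (hdisj _ _ hne) (hβ p) hk

section Permutations

variable {n : ℕ}

theorem Equiv.Perm.card_filter_lt_apply (σ : Perm (Fin n)) (j : Fin n) :
    #{t | σ t < σ j} = σ j := by
  rw [← Fin.card_Iio]
  exact card_bij (fun t _ => σ t) (by simp) (fun _ _ _ _ h => σ.injective h)
    fun k hk => ⟨σ.symm k, by simpa using hk, by simp⟩

/-- Both sets of predecessors of `j` have `σ j = τ j` elements, so an inclusion between them is an
equality. -/
theorem Equiv.Perm.lt_apply_of_forall_lt_apply {σ τ : Perm (Fin n)} {j : Fin n} (hj : σ j = τ j)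
    (h : ∀ t, τ t < τ j → σ t < σ j) {t : Fin n} (ht : σ t < σ j) : τ t < τ j := by
  have hsub : ({t | τ t < τ j} : Finset (Fin n)) ⊆ ({t | σ t < σ j} : Finset (Fin n)) := by
    intro t; simpa using h t
  have heq := eq_of_subset_of_card_le hsub <| by
    rw [Perm.card_filter_lt_apply, Perm.card_filter_lt_apply, hj]
  simpa [ht] using Finset.ext_iff.1 heq t

def StrictMonoOnBlocks {ι : Type*} (β : Fin n → ι) (σ : Perm (Fin n)) : Prop :=
  ∀ ⦃p q⦄, β p = β q → p < q → σ p < σ q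

variable {ι : Type*} {β : Fin n → ι} {σ τ : Perm (Fin n)} {j : Fin n}

theorem StrictMonoOnBlocks.le (hσ : StrictMonoOnBlocks β σ) {p q : Fin n} (hb : β p = β q)
    (hpq : p ≤ q) : σ p ≤ σ q := by
  rcases hpq.lt_or_eq with hpq | rfl
  · exact (hσ hb hpq).le
  · exact le_rfl

theorem StrictMonoOnBlocks.lt_of_apply_eq (hσ : StrictMonoOnBlocks β σ)
    (hτ : StrictMonoOnBlocks β τ) (hj : σ j = τ j)
    (hcover : ∀ t, β t ≠ β j → σ t < σ j ∨ τ j < τ t) {t : Fin n} (ht : σ t < σ j) :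
    τ t < τ j := by
  refine Perm.lt_apply_of_forall_lt_apply hj (fun t htτ => ?_) ht
  by_cases hb : β t = β j
  · rcases lt_trichotomy t j with h | rfl | h
    · exact hσ hb h
    · exact absurd htτ (lt_irrefl _)
    · exact absurd (hτ hb.symm h) htτ.not_gt
  · exact (hcover t hb).resolve_right htτ.not_gt

theorem StrictMonoOnBlocks.apply_lt_of_apply_eq (hσ : StrictMonoOnBlocks β σ)
    (hτ : StrictMonoOnBlocks β τ) (hj : σ j = τ j) (htop : ∀ t, β t ≠ β j → τ j < τ t) :
    ∀ t, β t ≠ β j → σ j < σ t := by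
  intro t ht
  refine lt_of_le_of_ne (not_lt.1 fun hlt => ?_) fun h => ht (by rw [σ.injective h])
  exact (htop t ht).not_gt (hσ.lt_of_apply_eq hτ hj (fun t ht => .inr (htop t ht)) hlt)

theorem StrictMonoOnBlocks.lt_apply_of_apply_eq (hσ : StrictMonoOnBlocks β σ)
    (hτ : StrictMonoOnBlocks β τ) (hj : σ j = τ j) (hbot : ∀ t, β t ≠ β j → σ t < σ j) :
    ∀ t, β t ≠ β j → τ t < τ j := fun t ht =>
  hσ.lt_of_apply_eq hτ hj (fun t ht => .inl (hbot t ht)) (hbot t ht)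

theorem lt_of_forall_castSucc_succ {m : ℕ} {β : Fin n → Fin (m + 1)} (hβ : ∀ k, ∃ p, β p = k)
    (hstep : ∀ (i : Fin m) ⦃p q⦄, β p = i.castSucc → β q = i.succ → σ p < σ q)
    {p q : Fin n} (h : β p < β q) : σ p < σ q := by
  suffices H : ∀ l : Fin (m + 1), ∀ p q, β p < l → β q = l → σ p < σ q from H _ p q h rfl
  intro l
  induction l using Fin.induction with
  | zero => exact fun p _ hp => absurd hp (Fin.not_lt_zero _)
  | succ i ih =>
    intro p q hp hq
    rcases (Fin.le_castSucc_iff.2 hp).lt_or_eq with hlt | heq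
    · obtain ⟨t, ht⟩ := hβ i.castSucc
      exact (ih p t hlt ht).trans (hstep i ht hq)
    · exact hstep i heq hq

end Permutations

theorem GroupUnanimous.lt_of_potential {m n : ℕ} {P : Fin m → Finset (Fin n)}
    {f : Profile m n P → Perm (Fin n)} (hf : GroupUnanimous P f) (π : Profile m n P)
    {α : Type*} [LinearOrder α] (φ : Fin n → α)
    (hφ : ∀ i, ∀ p ∈ P i, ∀ q ∈ P i, φ p < φ q → (π i).1 p < (π i).1 q)
    {p q : Fin n} (hpq : φ p < φ q) (hco : ∃ i, p ∈ P i ∧ q ∈ P i) : f π p < f π q := by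
  refine hf π {t | φ t ≤ φ p} ⟨p, by simp⟩ ?_ ?_ p q (by simp) (by simpa using hpq) hco
  · exact ssubset_univ_iff.2 fun h => not_le.2 hpq (by simpa using eq_univ_iff_forall.1 h q)
  · intro i p' q' hp' hq' hp'S hq'S
    simp only [mem_filter, mem_univ, true_and, not_le] at hp'S hq'S
    exact hφ i p' hp' q' hq' (hp'S.trans_lt hq'S)

namespace ReviewChain

variable {m n : ℕ}

/-- Orientation `v` of the chain: reviewer `i` reviews blocks `i.castSucc` and `i.succ` and prefers
the latter iff `v i`. -/
def preferredBlock (v : Fin m → Bool) (i : Fin m) : Fin (m + 1) :=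
  if v i then i.succ else i.castSucc

def otherBlock (v : Fin m → Bool) (i : Fin m) : Fin (m + 1) :=
  if v i then i.castSucc else i.succ

theorem preferredBlock_ne_otherBlock (v : Fin m → Bool) (i : Fin m) :
    preferredBlock v i ≠ otherBlock v i := by
  unfold preferredBlock otherBlock
  cases v i
  · exact i.castSucc_lt_succ.ne
  · exact i.castSucc_lt_succ.ne'

def chainRanking (β : Fin n → Fin (m + 1)) (v : Fin m → Bool) (i : Fin m) (p : Fin n) : ℕ :=
  if β p = preferredBlock v i then p else n + p

theorem chainRanking_injective (β : Fin n → Fin (m + 1)) (v : Fin m → Bool) (i : Fin m) :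
    Function.Injective (chainRanking β v i) := by
  intro p q h
  unfold chainRanking at h
  split_ifs at h <;> omega

def chainProfile (P : Fin m → Finset (Fin n)) (β : Fin n → Fin (m + 1)) (v : Fin m → Bool) :
    Profile m n P :=
  fun i => ⟨chainRanking β v i, (chainRanking_injective β v i).injOn⟩

theorem chainProfile_apply_of_eq {P : Fin m → Finset (Fin n)} {β : Fin n → Fin (m + 1)}
    {v w : Fin m → Bool} {i : Fin m} (h : v i = w i) :
    chainProfile P β v i = chainProfile P β w i := by
  have : chainRanking β v i = chainRanking β w i := by
    unfold chainRanking preferredBlock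
    rw [h]
  exact Subtype.ext this

def blockHeight (v : Fin m → Bool) : Fin (m + 1) → ℤ :=
  Fin.partialSum fun i => if v i then -1 else 1

theorem blockHeight_preferredBlock_lt (v : Fin m → Bool) (i : Fin m) :
    blockHeight v (preferredBlock v i) < blockHeight v (otherBlock v i) := by
  unfold blockHeight preferredBlock otherBlock
  cases h : v i <;> simp [Fin.partialSum_succ, h]

variable {P : Fin m → Finset (Fin n)} {β : Fin n → Fin (m + 1)}

theorem apply_chainProfile_eq {f : Profile m n P → Perm (Fin n)} {i : Fin m} {j : Fin n}
    (hj : ∀ π π' : Profile m n P, (∀ i', i' ≠ i → π i' = π' i') → f π j = f π' j)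
    {v w : Fin m → Bool} (hvw : ∀ i', i' ≠ i → v i' = w i') :
    f (chainProfile P β v) j = f (chainProfile P β w) j :=
  hj _ _ fun i' hi' => chainProfile_apply_of_eq (hvw i' hi')

theorem mem_iff_preferredBlock_or_otherBlock
    (hP : ∀ i p, p ∈ P i ↔ β p = i.castSucc ∨ β p = i.succ) (v : Fin m → Bool) (i : Fin m)
    (p : Fin n) : p ∈ P i ↔ β p = preferredBlock v i ∨ β p = otherBlock v i := by
  rw [hP]
  unfold preferredBlock otherBlock
  cases v i <;> simp [or_comm]

theorem chainRanking_lt (hP : ∀ i p, p ∈ P i ↔ β p = i.castSucc ∨ β p = i.succ)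
    (v : Fin m → Bool) {i : Fin m} {p q : Fin n} (hp : p ∈ P i) (hq : q ∈ P i)
    (h : toLex (blockHeight v (β p), p) < toLex (blockHeight v (β q), q)) :
    chainRanking β v i p < chainRanking β v i q := by
  have hne := preferredBlock_ne_otherBlock v i
  have hlt := blockHeight_preferredBlock_lt v i
  rw [Prod.Lex.toLex_lt_toLex] at h
  unfold chainRanking
  rcases (mem_iff_preferredBlock_or_otherBlock hP v i p).1 hp with hp' | hp' <;>
    rcases (mem_iff_preferredBlock_or_otherBlock hP v i q).1 hq with hq' | hq' <;>
    simp only [hp', hq', if_pos, if_neg hne.symm, lt_irrefl, false_or, true_and] at h ⊢ <;>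
    omega

structure ChainConsistent (β : Fin n → Fin (m + 1)) (out : (Fin m → Bool) → Perm (Fin n)) :
    Prop where
  strictMonoOnBlocks : ∀ v, StrictMonoOnBlocks β (out v)
  lt_of_preferred : ∀ v i ⦃p q⦄, β p = preferredBlock v i → β q = otherBlock v i →
    out v p < out v q

theorem exists_reviewer [NeZero m] (k : Fin (m + 1)) :
    ∃ i : Fin m, k = i.castSucc ∨ k = i.succ := by
  by_cases hk : (k : ℕ) < m
  · exact ⟨⟨k, hk⟩, .inl (Fin.ext rfl)⟩
  · have := NeZero.pos m
    exact ⟨⟨k - 1, by omega⟩, .inr (Fin.ext (show (k : ℕ) = k - 1 + 1 by omega))⟩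

theorem chainConsistent_of_groupUnanimous [NeZero m]
    (hP : ∀ i p, p ∈ P i ↔ β p = i.castSucc ∨ β p = i.succ) {f : Profile m n P → Perm (Fin n)}
    (hf : GroupUnanimous P f) : ChainConsistent β fun v => f (chainProfile P β v) := by
  have hlt v {p q : Fin n} (hco : ∃ i, p ∈ P i ∧ q ∈ P i)
      (h : toLex (blockHeight v (β p), p) < toLex (blockHeight v (β q), q)) :
      f (chainProfile P β v) p < f (chainProfile P β v) q :=
    hf.lt_of_potential _ (fun t => toLex (blockHeight v (β t), t))
      (fun i p hp q hq => chainRanking_lt hP v hp hq) h hco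
  constructor
  · intro v p q hb hpq
    obtain ⟨i, hi⟩ := exists_reviewer (β p)
    refine hlt v ⟨i, (hP i p).2 hi, (hP i q).2 (hb ▸ hi)⟩ ?_
    simp [Prod.Lex.toLex_lt_toLex, hb, hpq]
  · intro v i p q hp hq
    have hmem := mem_iff_preferredBlock_or_otherBlock hP v i
    refine hlt v ⟨i, (hmem p).2 (.inl hp), (hmem q).2 (.inr hq)⟩ ?_
    rw [Prod.Lex.toLex_lt_toLex, hp, hq]
    exact .inl (blockHeight_preferredBlock_lt v i)

namespace ChainConsistent

variable {β : Fin n → Fin (m + 1)} {out : (Fin m → Bool) → Perm (Fin n)} {p q : Fin n}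

theorem lt_of_edge (h : ChainConsistent β out) {v : Fin m → Bool} (i : Fin m) {k l : Fin (m + 1)}
    (hk : preferredBlock v i = k) (hl : otherBlock v i = l) (hp : β p = k) (hq : β q = l) :
    out v p < out v q :=
  h.lt_of_preferred v i (hp.trans hk.symm) (hq.trans hl.symm)

theorem lt_of_block_lt (h : ChainConsistent β out) (hβ : ∀ k, ∃ p, β p = k) (hpq : β p < β q) :
    out (fun _ => false) p < out (fun _ => false) q :=
  lt_of_forall_castSucc_succ hβ (fun i _ _ hp hq => h.lt_of_edge i (by simp [preferredBlock])
    (by simp [otherBlock]) hp hq) hpq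

theorem lt_of_block_gt (h : ChainConsistent β out) (hβ : ∀ k, ∃ p, β p = k) (hpq : β q < β p) :
    out (fun _ => true) p < out (fun _ => true) q := by
  refine lt_of_forall_castSucc_succ (β := fun t => (β t).rev)
    (fun k => (hβ k.rev).imp fun p hp => by simp [hp]) (fun i p q hp hq => ?_)
    (Fin.rev_lt_rev.2 hpq)
  refine h.lt_of_edge i.rev (k := i.rev.succ) (l := i.rev.castSucc) (by simp [preferredBlock])
    (by simp [otherBlock]) ?_ ?_
  · rw [← Fin.rev_castSucc, ← hp, Fin.rev_rev]
  · rw [← Fin.rev_succ, ← hq, Fin.rev_rev]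

variable {β : Fin n → Fin 4} {out : (Fin 3 → Bool) → Perm (Fin n)} {p q j : Fin n}

theorem lt_of_block_eq_one (h : ChainConsistent β out) (hβ : ∀ k, ∃ p, β p = k) (hp : β p = 1)
    (hq : β q ≠ 1) : out ![true, false, false] p < out ![true, false, false] q := by
  have h12 {s t : Fin n} (hs : β s = 1) (ht : β t = 2) :
      out ![true, false, false] s < out ![true, false, false] t :=
    h.lt_of_edge 1 (by decide) (by decide) hs ht
  rcases (show β q = 0 ∨ β q = 2 ∨ β q = 3 by omega) with hq | hq | hq
  · exact h.lt_of_edge 0 (by decide) (by decide) hp hq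
  · exact h12 hp hq
  · obtain ⟨t, ht⟩ := hβ 2
    exact (h12 hp ht).trans (h.lt_of_edge 2 (by decide) (by decide) ht hq)

theorem lt_of_block_eq_two (h : ChainConsistent β out) (hβ : ∀ k, ∃ p, β p = k) (hp : β p = 2)
    (hq : β q ≠ 2) : out ![true, true, false] p < out ![true, true, false] q := by
  have h21 {s t : Fin n} (hs : β s = 2) (ht : β t = 1) :
      out ![true, true, false] s < out ![true, true, false] t :=
    h.lt_of_edge 1 (by decide) (by decide) hs ht
  rcases (show β q = 0 ∨ β q = 1 ∨ β q = 3 by omega) with hq | hq | hq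
  · obtain ⟨t, ht⟩ := hβ 1
    exact (h21 hp ht).trans (h.lt_of_edge 0 (by decide) (by decide) ht hq)
  · exact h21 hp hq
  · exact h.lt_of_edge 2 (by decide) (by decide) hp hq

theorem block_eq_two_or_three (h : ChainConsistent β out) (hβ : ∀ k, ∃ p, β p = k)
    (hj : out (fun _ => false) j = out ![true, false, false] j) : β j = 2 ∨ β j = 3 := by
  have hA := h.strictMonoOnBlocks fun _ => false
  have hC := h.strictMonoOnBlocks ![true, false, false]
  rcases (show β j = 0 ∨ β j = 1 ∨ β j = 2 ∨ β j = 3 by omega) with hb | hb | hb | hb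
  · obtain ⟨t, ht⟩ := hβ 1
    have htop := hC.apply_lt_of_apply_eq hA hj.symm
      (fun s hs => h.lt_of_block_lt hβ (by omega)) t (by omega)
    exact ((h.lt_of_block_eq_one hβ ht (by omega)).not_gt htop).elim
  · obtain ⟨t, ht⟩ := hβ 0
    have htop := hA.apply_lt_of_apply_eq hC hj
      (fun s hs => h.lt_of_block_eq_one hβ hb (by omega)) t (by omega)
    exact ((h.lt_of_block_lt hβ (by omega)).not_gt htop).elim
  · exact .inl hb
  · exact .inr hb

theorem block_eq_zero_or_one (h : ChainConsistent β out) (hβ : ∀ k, ∃ p, β p = k)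
    (hj : out ![true, true, false] j = out (fun _ => true) j) : β j = 0 ∨ β j = 1 := by
  have hB := h.strictMonoOnBlocks fun _ => true
  have hD := h.strictMonoOnBlocks ![true, true, false]
  rcases (show β j = 0 ∨ β j = 1 ∨ β j = 2 ∨ β j = 3 by omega) with hb | hb | hb | hb
  · exact .inl hb
  · exact .inr hb
  · obtain ⟨t, ht⟩ := hβ 3
    have htop := hB.apply_lt_of_apply_eq hD hj.symm
      (fun s hs => h.lt_of_block_eq_two hβ hb (by omega)) t (by omega)
    exact ((h.lt_of_block_gt hβ (by omega)).not_gt htop).elim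
  · obtain ⟨t, ht⟩ := hβ 2
    have htop := hD.apply_lt_of_apply_eq hB hj
      (fun s hs => h.lt_of_block_gt hβ (by omega)) t (by omega)
    exact ((h.lt_of_block_eq_two hβ ht (by omega)).not_gt htop).elim

theorem block_eq_zero_or_three (h : ChainConsistent β out) (hβ : ∀ k, ∃ p, β p = k)
    (hj : out ![true, false, false] j = out ![true, true, false] j) : β j = 0 ∨ β j = 3 := by
  have hC := h.strictMonoOnBlocks ![true, false, false]
  have hD := h.strictMonoOnBlocks ![true, true, false]
  rcases (show β j = 0 ∨ β j = 1 ∨ β j = 2 ∨ β j = 3 by omega) with hb | hb | hb | hb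
  · exact .inl hb
  · obtain ⟨t, ht⟩ := hβ 2
    have htop := hD.apply_lt_of_apply_eq hC hj.symm
      (fun s hs => h.lt_of_block_eq_one hβ hb (by omega)) t (by omega)
    exact ((h.lt_of_block_eq_two hβ ht (by omega)).not_gt htop).elim
  · obtain ⟨t, ht⟩ := hβ 1
    have htop := hC.apply_lt_of_apply_eq hD hj
      (fun s hs => h.lt_of_block_eq_two hβ hb (by omega)) t (by omega)
    exact ((h.lt_of_block_eq_one hβ ht (by omega)).not_gt htop).elim
  · exact .inr hb

theorem lt_of_block_lt_of_apply_eq (h : ChainConsistent β out) (hβ : ∀ k, ∃ p, β p = k)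
    (hj : out (fun _ => false) j = out ![true, false, false] j) {t : Fin n} (ht : β t < β j) :
    out ![true, false, false] t < out ![true, false, false] j := by
  have hb := h.block_eq_two_or_three hβ hj
  refine (h.strictMonoOnBlocks _).lt_of_apply_eq (h.strictMonoOnBlocks _) hj (fun s hs => ?_)
    (h.lt_of_block_lt hβ ht)
  rcases lt_or_gt_of_ne hs with hs | hs
  · exact .inl (h.lt_of_block_lt hβ hs)
  · exact .inr <| h.lt_of_edge 2 (by decide) (by decide) (show β j = 2 by omega)
      (show β s = 3 by omega)

theorem lt_of_block_gt_of_apply_eq (h : ChainConsistent β out) (hβ : ∀ k, ∃ p, β p = k)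
    (hj : out ![true, true, false] j = out (fun _ => true) j) {t : Fin n} (ht : β j < β t) :
    out ![true, true, false] t < out ![true, true, false] j := by
  have hb := h.block_eq_zero_or_one hβ hj
  refine (h.strictMonoOnBlocks _).lt_of_apply_eq (h.strictMonoOnBlocks _) hj.symm
    (fun s hs => ?_) (h.lt_of_block_gt hβ ht)
  rcases lt_or_gt_of_ne hs with hs | hs
  · exact .inr <| h.lt_of_edge 0 (by decide) (by decide) (show β j = 1 by omega)
      (show β s = 0 by omega)
  · exact .inl (h.lt_of_block_gt hβ hs)

theorem false_of_block_eq_zero (h : ChainConsistent β out) (hβ : ∀ k, ∃ p, β p = k)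
    {j₀ j₁ j₂ : Fin n} (h₀ : out (fun _ => false) j₀ = out ![true, false, false] j₀)
    (h₂ : out ![true, true, false] j₂ = out (fun _ => true) j₂)
    (h₁ : out ![true, false, false] j₁ = out ![true, true, false] j₁)
    (h₁' : out ![true, false, true] j₁ = out (fun _ => true) j₁)
    (h₂' : out ![true, false, false] j₂ = out ![true, false, true] j₂) (hb : β j₁ = 0) : False := by
  have hC := h.strictMonoOnBlocks ![true, false, false]
  have hD := h.strictMonoOnBlocks ![true, true, false]
  have hG := h.strictMonoOnBlocks ![true, false, true]
  have hb₀ := h.block_eq_two_or_three hβ h₀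
  have hb₂ := h.block_eq_zero_or_one hβ h₂
  have hC₁₀ := h.lt_of_block_lt_of_apply_eq hβ h₀ (t := j₁) (by omega)
  rcases hb₀ with hb₀ | hb₀
  · refine (hD.lt_of_apply_eq hC h₁.symm (fun t ht => ?_)
      (h.lt_of_block_eq_two hβ hb₀ (by omega))).not_gt hC₁₀
    rcases (show β t = 1 ∨ β t = 2 ∨ β t = 3 by omega) with ht | ht | ht
    · exact .inl (h.lt_of_edge 0 (by decide) (by decide) ht hb)
    · exact .inl (h.lt_of_block_eq_two hβ ht (by omega))
    · exact .inr (hC₁₀.trans (h.lt_of_edge 2 (by decide) (by decide) hb₀ ht))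
  have hD₂₁ : out ![true, true, false] j₂ ≤ out ![true, true, false] j₁ ∨ β j₂ = 0 ∧ j₁ < j₂ := by
    rcases hb₂ with hb₂ | hb₂
    · rcases lt_or_ge j₁ j₂ with h₁₂ | h₂₁
      · exact .inr ⟨hb₂, h₁₂⟩
      · exact .inl (hD.le (hb₂.trans hb.symm) h₂₁)
    · exact .inl (h.lt_of_edge 0 (by decide) (by decide) hb₂ hb).le
  rcases hD₂₁ with hle | ⟨hb₂, h₁₂⟩
  · refine (hD.lt_apply_of_apply_eq hC h₁.symm (fun t ht => ?_) j₀ (by omega)).not_gt hC₁₀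
    rcases (show β t = 1 ∨ β t = 2 ∨ β t = 3 by omega) with ht | ht | ht
    · exact h.lt_of_edge 0 (by decide) (by decide) ht hb
    · exact h.lt_of_block_eq_two hβ ht (by omega)
    · exact (h.lt_of_block_gt_of_apply_eq hβ h₂ (by omega)).trans_le hle
  · have hG₁ := (h.strictMonoOnBlocks _).lt_apply_of_apply_eq hG h₁'.symm
      (fun t ht => h.lt_of_block_gt hβ (by omega))
    have hC₂ := hG.lt_apply_of_apply_eq hC h₂'.symm
      (fun t ht => (hG₁ t (by omega)).trans (hG (hb.trans hb₂.symm) h₁₂)) j₀ (by omega)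
    exact hC₂.not_gt (h.lt_of_block_lt_of_apply_eq hβ h₀ (by omega))

theorem false_of_block_eq_three (h : ChainConsistent β out) (hβ : ∀ k, ∃ p, β p = k)
    {j₀ j₁ j₂ : Fin n} (h₀ : out (fun _ => false) j₀ = out ![true, false, false] j₀)
    (h₂ : out ![true, true, false] j₂ = out (fun _ => true) j₂)
    (h₁ : out ![true, false, false] j₁ = out ![true, true, false] j₁)
    (h₁' : out (fun _ => false) j₁ = out ![false, true, false] j₁)
    (h₀' : out ![false, true, false] j₀ = out ![true, true, false] j₀) (hb : β j₁ = 3) : False := by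
  have hC := h.strictMonoOnBlocks ![true, false, false]
  have hD := h.strictMonoOnBlocks ![true, true, false]
  have hE := h.strictMonoOnBlocks ![false, true, false]
  have hb₀ := h.block_eq_two_or_three hβ h₀
  have hb₂ := h.block_eq_zero_or_one hβ h₂
  have hD₁₂ := h.lt_of_block_gt_of_apply_eq hβ h₂ (t := j₁) (by omega)
  rcases hb₂.symm with hb₂ | hb₂
  · refine (hC.lt_of_apply_eq hD h₁ (fun t ht => ?_)
      (h.lt_of_block_eq_one hβ hb₂ (by omega))).not_gt hD₁₂
    rcases (show β t = 0 ∨ β t = 1 ∨ β t = 2 by omega) with ht | ht | ht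
    · exact .inr (hD₁₂.trans (h.lt_of_edge 0 (by decide) (by decide) hb₂ ht))
    · exact .inl (h.lt_of_block_eq_one hβ ht (by omega))
    · exact .inl (h.lt_of_edge 2 (by decide) (by decide) ht hb)
  have hC₀₁ : out ![true, false, false] j₀ ≤ out ![true, false, false] j₁ ∨ β j₀ = 3 ∧ j₁ < j₀ := by
    rcases hb₀ with hb₀ | hb₀
    · exact .inl (h.lt_of_edge 2 (by decide) (by decide) hb₀ hb).le
    · rcases lt_or_ge j₁ j₀ with h₁₀ | h₀₁
      · exact .inr ⟨hb₀, h₁₀⟩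
      · exact .inl (hC.le (hb₀.trans hb.symm) h₀₁)
  rcases hC₀₁ with hle | ⟨hb₀, h₁₀⟩
  · refine (hC.lt_apply_of_apply_eq hD h₁ (fun t ht => ?_) j₂ (by omega)).not_gt hD₁₂
    rcases (show β t = 0 ∨ β t = 1 ∨ β t = 2 by omega) with ht | ht | ht
    · exact (h.lt_of_block_lt_of_apply_eq hβ h₀ (by omega)).trans_le hle
    · exact h.lt_of_block_eq_one hβ ht (by omega)
    · exact h.lt_of_edge 2 (by decide) (by decide) ht hb
  · have hE₁ := (h.strictMonoOnBlocks _).lt_apply_of_apply_eq hE h₁'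
      (fun t ht => h.lt_of_block_lt hβ (by omega))
    have hD₀ := hE.lt_apply_of_apply_eq hD h₀'
      (fun t ht => (hE₁ t (by omega)).trans (hE (hb.trans hb₀.symm) h₁₀)) j₂ (by omega)
    exact hD₀.not_gt (h.lt_of_block_gt_of_apply_eq hβ h₂ (by omega))

end ChainConsistent

end ReviewChain

theorem no_gu_wsp_chain_general {n : ℕ} (Q : Fin 4 → Finset (Fin n))
    (hne : ∀ a, (Q a).Nonempty)
    (hdisj : ∀ a b, a ≠ b → Disjoint (Q a) (Q b))
    (hcover : Finset.univ.biUnion Q = Finset.univ) :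
    ¬ ∃ f : Profile 3 n ![Q 0 ∪ Q 1, Q 1 ∪ Q 2, Q 2 ∪ Q 3] → Equiv.Perm (Fin n),
        GroupUnanimous _ f ∧ WeaklyStrategyproof _ f := by
  open ReviewChain in
  rintro ⟨f, hf, hwsp⟩
  obtain ⟨β, hβQ⟩ := exists_forall_mem_iff_eq hdisj hcover
  have hβ (k : Fin 4) : ∃ p, β p = k := (hne k).imp fun p => (hβQ p k).1
  have hP (i : Fin 3) (p : Fin n) :
      p ∈ ![Q 0 ∪ Q 1, Q 1 ∪ Q 2, Q 2 ∪ Q 3] i ↔ β p = i.castSucc ∨ β p = i.succ := by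
    fin_cases i <;> simp [hβQ]
  have h := chainConsistent_of_groupUnanimous hP hf
  obtain ⟨j₀, hj₀⟩ := hwsp 0
  obtain ⟨j₁, hj₁⟩ := hwsp 1
  obtain ⟨j₂, hj₂⟩ := hwsp 2
  rcases h.block_eq_zero_or_three hβ (apply_chainProfile_eq hj₁ (by decide)) with hb | hb
  · exact h.false_of_block_eq_zero hβ (apply_chainProfile_eq hj₀ (by decide))
      (apply_chainProfile_eq hj₂ (by decide)) (apply_chainProfile_eq hj₁ (by decide))
      (apply_chainProfile_eq hj₁ (by decide)) (apply_chainProfile_eq hj₂ (by decide)) hb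
  · exact h.false_of_block_eq_three hβ (apply_chainProfile_eq hj₀ (by decide))
      (apply_chainProfile_eq hj₂ (by decide)) (apply_chainProfile_eq hj₁ (by decide))
      (apply_chainProfile_eq hj₁ (by decide)) (apply_chainProfile_eq hj₀ (by decide)) hb

/-- with `n ≥ 4` papers partitioned into four disjoint nonempty
blocks `Q 0, Q 1, Q 2, Q 3`, and three reviewers reviewing `Q 0 ∪ Q 1`,
`Q 1 ∪ Q 2` and `Q 2 ∪ Q 3` respectively, no aggregation rule is both group
unanimous and weakly strategyproof. -/
theorem no_gu_wsp_chain {n : ℕ} (hn : 4 ≤ n) (Q : Fin 4 → Finset (Fin n))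
    (hne : ∀ a, (Q a).Nonempty)
    (hdisj : ∀ a b, a ≠ b → Disjoint (Q a) (Q b))
    (hcover : Finset.univ.biUnion Q = Finset.univ) :
    ¬ ∃ f : Profile 3 n ![Q 0 ∪ Q 1, Q 1 ∪ Q 2, Q 2 ∪ Q 3] → Equiv.Perm (Fin n),
        GroupUnanimous _ f ∧ WeaklyStrategyproof _ f :=
  no_gu_wsp_chain_general Q hne hdisj hcover
end

section
/- Suppose n ≥ 2 papers, and every reviewer reviews all n papers (each reviewer submits a total ranking of all papers). Then there is no aggregation rule f that is both pairwise unanimous and weakly strategyproof. -/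
/-!
Let the reviewers of a coalition `S` submit the rotation that moves the last paper to the top and
the others the identity ranking. All these profiles order the first `n - 1` papers in the same
way, so by pairwise unanimity the output is determined by the position `p S` of the last paper:
paper `v` lands at `v` if `v < p S` and at `v + 1` otherwise. Weak strategyproofness gives every
reviewer `i` a paper `j i` she cannot move. Start from the full coalition, where `p = 0`, and
release the reviewers with `j i = 0, 1, …, n - 2` in turn: releasing those with `j i = v` keeps
paper `v` at `v + 1`, hence `p ≤ v`. Releasing finally the reviewers with `j i = n - 1` does not
move the last paper, so `p ∅ ≤ n - 2`, whereas unanimity puts the last paper last in `∅`.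
-/

/-- In the total-ranking setting, each reviewer submits a permutation of the
`n` papers (paper ↦ position).  Pairwise unanimity: if every reviewer ranks
`p` above `q`, then so does the aggregate ranking. -/
def PairwiseUnanimousTotal {m n : ℕ}
    (f : (Fin m → Equiv.Perm (Fin n)) → Equiv.Perm (Fin n)) : Prop :=
  ∀ (π : Fin m → Equiv.Perm (Fin n)) (p q : Fin n),
    (∀ i, π i p < π i q) → f π p < f π q

/-- Weak strategyproofness in the total-ranking setting. -/
def WeaklyStrategyproofTotal {m n : ℕ}
    (f : (Fin m → Equiv.Perm (Fin n)) → Equiv.Perm (Fin n)) : Prop :=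
  ∀ i : Fin m, ∃ j : Fin n, ∀ π π' : Fin m → Equiv.Perm (Fin n),
    (∀ i', i' ≠ i → π i' = π' i') → f π j = f π' j

open Finset

namespace Equiv.Perm

variable {n : ℕ} {σ : Perm (Fin (n + 1))}

theorem comp_castSucc_eq_succAbove (h : StrictMono (σ ∘ Fin.castSucc)) :
    σ ∘ Fin.castSucc = (σ (Fin.last n)).succAbove := by
  refine (h.range_inj (Fin.strictMono_succAbove _)).mp ?_
  rw [Set.range_comp, ← Fin.succAbove_last, Fin.range_succAbove, Fin.range_succAbove,
    Set.image_compl_eq σ.bijective, Set.image_singleton]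

theorem apply_eq_last_of_forall_lt {a : Fin (n + 1)} (h : ∀ x ≠ a, σ x < σ a) :
    σ a = Fin.last n := by
  by_contra hne
  have hlt := h (σ.symm (Fin.last n)) fun ha => hne (by rw [← ha, apply_symm_apply])
  exact (σ.apply_symm_apply _ ▸ hlt).not_ge (Fin.le_last _)

theorem apply_eq_zero_of_forall_lt {a : Fin (n + 1)} (h : ∀ x ≠ a, σ a < σ x) : σ a = 0 := by
  by_contra hne
  have hlt := h (σ.symm 0) fun ha => hne (by rw [← ha, apply_symm_apply])
  exact (σ.apply_symm_apply _ ▸ hlt).not_ge (Fin.zero_le _)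

end Equiv.Perm

variable {m N : ℕ}

def rotationProfile (S : Finset (Fin m)) : Fin m → Equiv.Perm (Fin (N + 1)) :=
  fun i => if i ∈ S then finRotate (N + 1) else 1

theorem strictMono_rotationProfile_comp_castSucc (S : Finset (Fin m)) (i : Fin m) :
    StrictMono (rotationProfile (N := N) S i ∘ Fin.castSucc) := by
  by_cases hi : i ∈ S
  · convert Fin.strictMono_succ using 1
    ext x
    simp [rotationProfile, hi]
  · simpa [rotationProfile, hi] using Fin.strictMono_castSucc

namespace PairwiseUnanimousTotal

variable {f : (Fin m → Equiv.Perm (Fin (N + 1))) → Equiv.Perm (Fin (N + 1))}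
  (hf : PairwiseUnanimousTotal f)
include hf

theorem rotationProfile_empty_last : f (rotationProfile ∅) (Fin.last N) = Fin.last N :=
  Equiv.Perm.apply_eq_last_of_forall_lt fun x hx =>
    hf _ _ _ fun i => by simpa [rotationProfile] using Fin.lt_last_iff_ne_last.mpr hx

theorem rotationProfile_univ_last : f (rotationProfile univ) (Fin.last N) = 0 :=
  Equiv.Perm.apply_eq_zero_of_forall_lt fun x hx =>
    hf _ _ _ fun i => by
      simp only [rotationProfile, mem_univ, if_true]
      rw [finRotate_last, Fin.pos_iff_ne_zero, ← finRotate_last, Ne,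
        (finRotate _).injective.eq_iff]
      exact hx

theorem rotationProfile_comp_castSucc (S : Finset (Fin m)) :
    f (rotationProfile S) ∘ Fin.castSucc = (f (rotationProfile S) (Fin.last N)).succAbove :=
  Equiv.Perm.comp_castSucc_eq_succAbove fun _ _ hxy =>
    hf _ _ _ fun i => strictMono_rotationProfile_comp_castSucc S i hxy

theorem rotationProfile_last_le_castSucc_iff (S : Finset (Fin m)) (x : Fin N) :
    f (rotationProfile S) (Fin.last N) ≤ x.castSucc ↔
      f (rotationProfile S) x.castSucc = x.succ := by
  rw [← Function.comp_apply (f := f (rotationProfile S)), hf.rotationProfile_comp_castSucc]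
  refine ⟨Fin.succAbove_of_le_castSucc _ _, fun h => not_lt.mp fun hlt => ?_⟩
  rw [Fin.succAbove_of_castSucc_lt _ _ hlt] at h
  exact Fin.castSucc_lt_succ.ne h

end PairwiseUnanimousTotal

theorem apply_rotationProfile_union_eq
    {f : (Fin m → Equiv.Perm (Fin (N + 1))) → Equiv.Perm (Fin (N + 1))} {j : Fin m → Fin (N + 1)}
    (hj : ∀ i (π π' : Fin m → Equiv.Perm (Fin (N + 1))),
      (∀ i', i' ≠ i → π i' = π' i') → f π (j i) = f π' (j i))
    (S E : Finset (Fin m)) {x : Fin (N + 1)} (hE : ∀ i ∈ E, j i = x) :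
    f (rotationProfile (S ∪ E)) x = f (rotationProfile S) x := by
  induction E using Finset.induction_on with
  | empty => rw [union_empty]
  | insert a E _ ih =>
    obtain rfl := hE a (mem_insert_self a E)
    rw [union_insert, hj a _ (rotationProfile (S ∪ E)) fun i hi => by simp [rotationProfile, hi]]
    exact ih fun i hi => hE i (mem_insert_of_mem hi)

def rotators (j : Fin m → Fin (N + 1)) (v : ℕ) : Finset (Fin m) := {i | v ≤ (j i : ℕ)}

namespace PairwiseUnanimousTotal

variable {f : (Fin m → Equiv.Perm (Fin (N + 1))) → Equiv.Perm (Fin (N + 1))}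
  (hf : PairwiseUnanimousTotal f)
include hf

section Strategyproof

variable {j : Fin m → Fin (N + 1)}
  (hj : ∀ i (π π' : Fin m → Equiv.Perm (Fin (N + 1))),
    (∀ i', i' ≠ i → π i' = π' i') → f π (j i) = f π' (j i))
include hj

theorem rotationProfile_rotators_succ_last_le {v : ℕ} (hv : v < N)
    (h : (f (rotationProfile (rotators j v)) (Fin.last N) : ℕ) ≤ v) :
    (f (rotationProfile (rotators j (v + 1))) (Fin.last N) : ℕ) ≤ v := by
  let x : Fin N := ⟨v, hv⟩
  let E : Finset (Fin m) := {i | j i = x.castSucc}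
  have hsplit : rotators j (v + 1) ∪ E = rotators j v := by
    ext i
    simp only [rotators, E, mem_union, mem_filter, mem_univ, true_and, Fin.ext_iff,
      Fin.val_castSucc, x]
    omega
  have hx := apply_rotationProfile_union_eq hj (rotators j (v + 1)) E (x := x.castSucc)
    (by simp [E])
  rw [hsplit] at hx
  change _ ≤ x.castSucc at h ⊢
  rw [hf.rotationProfile_last_le_castSucc_iff] at h ⊢
  rwa [← hx]

theorem rotationProfile_rotators_last_le :
    ∀ v < N, (f (rotationProfile (rotators j (v + 1))) (Fin.last N) : ℕ) ≤ v
  | 0, hN => hf.rotationProfile_rotators_succ_last_le hj hN <| by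
      have : rotators j 0 = univ := by ext; simp [rotators]
      simp [this, hf.rotationProfile_univ_last]
  | v + 1, hv => hf.rotationProfile_rotators_succ_last_le hj hv <|
      (rotationProfile_rotators_last_le v (by omega)).trans v.le_succ

end Strategyproof

theorem not_weaklyStrategyproofTotal (hN : 0 < N) : ¬ WeaklyStrategyproofTotal f := by
  intro hwsp
  choose j hj using hwsp
  have hle := hf.rotationProfile_rotators_last_le hj (N - 1) (by omega)
  rw [Nat.sub_add_cancel hN] at hle
  have hsplit : ∅ ∪ ({i | j i = Fin.last N} : Finset (Fin m)) = rotators j N := by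
    ext i
    simp only [rotators, empty_union, mem_filter, mem_univ, true_and, Fin.ext_iff, Fin.val_last]
    have := (j i).isLt
    omega
  rw [← hsplit, apply_rotationProfile_union_eq hj _ _ (by simp),
    hf.rotationProfile_empty_last, Fin.val_last] at hle
  omega

end PairwiseUnanimousTotal

/-- with `n ≥ 2` papers, when every reviewer ranks all papers,
no aggregation rule is both pairwise unanimous and weakly strategyproof. -/
theorem no_pu_wsp_total {m n : ℕ} (hn : 2 ≤ n) :
    ¬ ∃ f : (Fin m → Equiv.Perm (Fin n)) → Equiv.Perm (Fin n),
        PairwiseUnanimousTotal f ∧ WeaklyStrategyproofTotal f := by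
  rintro ⟨f, hf, hwsp⟩
  obtain ⟨N, rfl⟩ : ∃ N, n = N + 1 := ⟨n - 1, by omega⟩
  exact hf.not_weaklyStrategyproofTotal (by omega) hwsp
end

section
/- Diagonalization lemma: In the total-ranking setting, partition the reviewers into groups R'_1,...,R'_{m'} so that no reviewer in group R'_k can influence paper e_k (in the influence graph of f). Let π = e_1 ≻ e_2 ≻ ... ≻ e_{m'} and π' = e_2 ≻ e_3 ≻ ... ≻ e_{m'} ≻ e_1 (restricted to papers e_1,...,e_{m'}, with all other papers below). Define profiles π_k in which the first k groups report π' and the remaining groups report π. If f is pairwise unanimous and weakly strategyproof, then for every k ∈ {1,...,m'}, paper e_k occupies position k in the output f(π_k). -/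
open Finset

theorem apply_eq_of_forall_notMem_eq {ι α β : Type*} [DecidableEq ι] (F : (ι → α) → β)
    (s : Finset ι) (hF : ∀ i ∈ s, ∀ x y : ι → α, (∀ j, j ≠ i → x j = y j) → F x = F y)
    {x y : ι → α} (hxy : ∀ i ∉ s, x i = y i) : F x = F y := by
  induction s using Finset.induction_on generalizing x with
  | empty => exact congrArg F (funext fun i => hxy i (notMem_empty i))
  | insert a s _ ih =>
    calc F x = F (Function.update x a (y a)) :=
          hF a (mem_insert_self a s) _ _ fun j hj => (Function.update_of_ne hj _ _).symm
      _ = F y := by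
        refine ih (fun i hi => hF i (mem_insert_of_mem hi)) fun i hi => ?_
        by_cases hia : i = a
        · subst hia; exact Function.update_self ..
        · rw [Function.update_of_ne hia]
          exact hxy i (by simp [hia, hi])

theorem Equiv.val_lt_card_of_forall_notMem_lt {α : Type*} {n : ℕ} (ρ : α ≃ Fin n) {x : α}
    {T : Finset α} (h : ∀ q ∉ T, ρ x < ρ q) : (ρ x : ℕ) < #T := by
  have hsub : (Iic (ρ x)).map ρ.symm.toEmbedding ⊆ T := by
    intro q hq
    obtain ⟨a, ha, rfl⟩ := mem_map.mp hq
    by_contra hT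
    have := h _ hT
    simp only [Equiv.coe_toEmbedding, Equiv.apply_symm_apply] at this
    exact (mem_Iic.mp ha).not_gt this
  calc (ρ x : ℕ) < #(Iic (ρ x)) := by rw [Fin.card_Iic]; omega
    _ = #((Iic (ρ x)).map ρ.symm.toEmbedding) := (card_map _).symm
    _ ≤ #T := card_le_card hsub

theorem Nat.add_sub_one_mod_self {j m : ℕ} (hj : 0 < j) (hjm : j < m) :
    (j + m - 1) % m = j - 1 := by
  rw [show j + m - 1 = j - 1 + m by omega, Nat.add_mod_right, Nat.mod_eq_of_lt (by omega)]

section Ranking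

variable {m m' n : ℕ}

def splitProfile (g : Fin m → Fin m') (σ τ : Equiv.Perm (Fin n)) (N : ℕ) :
    Fin m → Equiv.Perm (Fin n) :=
  fun i => if (g i : ℕ) < N then τ else σ

theorem apply_splitProfile_succ {f : (Fin m → Equiv.Perm (Fin n)) → Equiv.Perm (Fin n)}
    {e : Fin m' → Fin n} {g : Fin m → Fin m'}
    (hinfl : ∀ (i : Fin m) (π π' : Fin m → Equiv.Perm (Fin n)),
      (∀ i', i' ≠ i → π i' = π' i') → f π (e (g i)) = f π' (e (g i)))
    (σ τ : Equiv.Perm (Fin n)) (N : ℕ) (hN : N < m') :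
    f (splitProfile g σ τ (N + 1)) (e ⟨N, hN⟩) = f (splitProfile g σ τ N) (e ⟨N, hN⟩) := by
  refine apply_eq_of_forall_notMem_eq (fun π => f π (e ⟨N, hN⟩))
    (univ.filter fun i => g i = ⟨N, hN⟩) (fun i hi π π' hπ => ?_) fun i hi => ?_
  · rw [← (mem_filter.mp hi).2]
    exact hinfl i π π' hπ
  · have hgi : (g i : ℕ) ≠ N := fun h => by simp [Fin.ext_iff, h] at hi
    simp only [splitProfile]
    split_ifs <;> first | rfl | omega

def RanksAbove (ρ : Equiv.Perm (Fin n)) (e : Fin m' → Fin n) (j : Fin m') : Prop :=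
  ∀ q, (∀ j' ≤ j, q ≠ e j') → ρ (e j) < ρ q

theorem ranksAbove_of_forall_notMem_range {ρ : Equiv.Perm (Fin n)} {e : Fin m' → Fin n}
    (hout : ∀ p : Fin n, (∀ j, p ≠ e j) → m' ≤ (ρ p : ℕ)) {j : Fin m'}
    (hbound : (ρ (e j) : ℕ) < m') (hmono : ∀ j', j < j' → ρ (e j) < ρ (e j')) :
    RanksAbove ρ e j := by
  intro q hq
  by_cases hrange : ∃ j', q = e j'
  · obtain ⟨j', rfl⟩ := hrange
    exact hmono j' (lt_of_not_ge fun h => hq j' h rfl)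
  · push Not at hrange
    exact Fin.lt_def.mpr (hbound.trans_le (hout q hrange))

theorem RanksAbove.val_apply_le {ρ : Equiv.Perm (Fin n)} {e : Fin m' → Fin n} {j : Fin m'}
    (h : RanksAbove ρ e j) : (ρ (e j) : ℕ) ≤ j := by
  have hlt := ρ.val_lt_card_of_forall_notMem_lt (T := (Iic j).image e)
    fun q hq => h q fun j' hj' hqj' => hq (mem_image.mpr ⟨j', mem_Iic.mpr hj', hqj'.symm⟩)
  have hcard : #((Iic j).image e) ≤ j + 1 := card_image_le.trans (Fin.card_Iic j).le
  omega

theorem PairwiseUnanimousTotal.ranksAbove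
    {f : (Fin m → Equiv.Perm (Fin n)) → Equiv.Perm (Fin n)} (hpu : PairwiseUnanimousTotal f)
    {e : Fin m' → Fin n} {j : Fin m'} (π : Fin m → Equiv.Perm (Fin n))
    (h : ∀ i, RanksAbove (π i) e j) : RanksAbove (f π) e j :=
  fun q hq => hpu π _ q fun i => h i q hq

theorem ranksAbove_splitProfile
    {f : (Fin m → Equiv.Perm (Fin n)) → Equiv.Perm (Fin n)} (hpu : PairwiseUnanimousTotal f)
    {e : Fin m' → Fin n} {g : Fin m → Fin m'} {σ τ : Equiv.Perm (Fin n)}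
    (hσ : ∀ j : Fin m', (σ (e j) : ℕ) = (j : ℕ))
    (hσ' : ∀ p : Fin n, (∀ j, p ≠ e j) → m' ≤ (σ p : ℕ))
    (hτ : ∀ j : Fin m', (τ (e j) : ℕ) = ((j : ℕ) + m' - 1) % m')
    (hτ' : ∀ p : Fin n, (∀ j, p ≠ e j) → m' ≤ (τ p : ℕ))
    (N : ℕ) (j : Fin m') (hj : 0 < N → 0 < (j : ℕ)) :
    RanksAbove (f (splitProfile g σ τ N)) e j := by
  have hτ_pos : ∀ j : Fin m', 0 < (j : ℕ) → (τ (e j) : ℕ) = j - 1 := fun j hj => by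
    rw [hτ, Nat.add_sub_one_mod_self hj j.isLt]
  refine hpu.ranksAbove _ fun i => ?_
  unfold splitProfile
  split_ifs with hi
  · have hj := hj (by omega)
    exact ranksAbove_of_forall_notMem_range hτ' (by rw [hτ_pos j hj]; omega) fun j' hj' => by
      rw [Fin.lt_def, hτ_pos j hj, hτ_pos j' (by omega)]; omega
  · exact ranksAbove_of_forall_notMem_range hσ' (by rw [hσ]; exact j.isLt) fun j' hj' => by
      rw [Fin.lt_def, hσ, hσ]; exact hj'

end Ranking

theorem diagonalization_lemma_general {m n m' : ℕ}
    (f : (Fin m → Equiv.Perm (Fin n)) → Equiv.Perm (Fin n))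
    (hpu : PairwiseUnanimousTotal f)
    (e : Fin m' → Fin n) (he : Function.Injective e)
    (g : Fin m → Fin m')
    (hinfl : ∀ (i : Fin m) (π π' : Fin m → Equiv.Perm (Fin n)),
      (∀ i', i' ≠ i → π i' = π' i') → f π (e (g i)) = f π' (e (g i)))
    (σ τ : Equiv.Perm (Fin n))
    (hσ : ∀ j : Fin m', (σ (e j) : ℕ) = (j : ℕ))
    (hσ' : ∀ p : Fin n, (∀ j, p ≠ e j) → m' ≤ (σ p : ℕ))
    (hτ : ∀ j : Fin m', (τ (e j) : ℕ) = ((j : ℕ) + m' - 1) % m')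
    (hτ' : ∀ p : Fin n, (∀ j, p ≠ e j) → m' ≤ (τ p : ℕ)) :
    ∀ k : Fin m',
      (f (fun i => if (g i : ℕ) < (k : ℕ) + 1 then τ else σ) (e k) : ℕ)
        = (k : ℕ) := by
  have hranks := ranksAbove_splitProfile (g := g) hpu hσ hσ' hτ hτ'
  suffices h : ∀ N (hN : N < m'), (f (splitProfile g σ τ (N + 1)) (e ⟨N, hN⟩) : ℕ) = N from
    fun k => h k k.isLt
  intro N
  induction N with
  | zero =>
    intro hN
    rw [apply_splitProfile_succ hinfl]
    exact Nat.le_zero.mp ((hranks 0 _ (by simp)).val_apply_le)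
  | succ k ih =>
    intro hN
    have hprev := ih (by omega)
    rw [apply_splitProfile_succ hinfl]
    have hupper := (hranks (k + 1) ⟨k + 1, hN⟩ fun _ => by simp).val_apply_le
    have hne : (f (splitProfile g σ τ (k + 1)) (e ⟨k + 1, hN⟩) : ℕ) ≠ k := fun h =>
      absurd (he ((Equiv.injective _) (Fin.ext (h.trans hprev.symm)))) (by simp)
    have hlower : k ≤ (f (splitProfile g σ τ (k + 1)) (e ⟨k + 1, hN⟩) : ℕ) := by
      rcases Nat.eq_zero_or_pos k with rfl | hk
      · exact Nat.zero_le _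
      · refine hprev.ge.trans (Fin.lt_def.mp (hranks (k + 1) ⟨k, by omega⟩ (fun _ => hk) _ ?_)).le
        intro j' hj' hj'e
        have := congrArg Fin.val (he hj'e)
        simp only [Fin.le_def] at hj' this
        omega
    simp only at hupper
    omega

/-- diagonalization lemma.  `e 0, …, e (m'-1)` are distinct
papers; `g` assigns each reviewer a group index, and no reviewer in group `k`
can influence the output position of `e k`.  `σ` is the ranking
`e 0 ≻ e 1 ≻ ⋯ ≻ e (m'-1)` (all other papers below), and `τ` the rotated
ranking `e 1 ≻ e 2 ≻ ⋯ ≻ e (m'-1) ≻ e 0` (all other papers below).  In the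
profile where the first `k+1` groups report `τ` and the rest report `σ`, if
`f` is pairwise unanimous and weakly strategyproof, paper `e k` occupies
position `k` in the output. -/
theorem diagonalization_lemma {m n m' : ℕ} (hm' : 2 ≤ m') (hm'n : m' ≤ n)
    (f : (Fin m → Equiv.Perm (Fin n)) → Equiv.Perm (Fin n))
    (hpu : PairwiseUnanimousTotal f) (hwsp : WeaklyStrategyproofTotal f)
    (e : Fin m' → Fin n) (he : Function.Injective e)
    (g : Fin m → Fin m')
    (hinfl : ∀ (i : Fin m) (π π' : Fin m → Equiv.Perm (Fin n)),
      (∀ i', i' ≠ i → π i' = π' i') → f π (e (g i)) = f π' (e (g i)))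
    (σ τ : Equiv.Perm (Fin n))
    (hσ : ∀ j : Fin m', (σ (e j) : ℕ) = (j : ℕ))
    (hσ' : ∀ p : Fin n, (∀ j, p ≠ e j) → m' ≤ (σ p : ℕ))
    (hτ : ∀ j : Fin m', (τ (e j) : ℕ) = ((j : ℕ) + m' - 1) % m')
    (hτ' : ∀ p : Fin n, (∀ j, p ≠ e j) → m' ≤ (τ p : ℕ)) :
    ∀ k : Fin m',
      (f (fun i => if (g i : ℕ) < (k : ℕ) + 1 then τ else σ) (e k) : ℕ)
        = (k : ℕ) :=
  diagonalization_lemma_general f hpu e he g hinfl σ τ hσ hσ' hτ hτ'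
end
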